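/- arXiv:2211.02034 — 2 statements merged into one kernel-verified Lean document; each statement's English description precedes it below -/
import Mathlib

section
/- Let n ≥ 1 and m ≥ 1 be integers, let A be an invertible n×n complex matrix, let σ : {1,…,m} → ℤ, and let τ be a permutation of {1,…,m}. Then Σ_{i : {1,…,m} → {1,…,n}} Π_{l=1}^{m} (A^{σ(l)})_{i(l), i(τ(l))} = Π_{o ∈ Orb(τ)} Tr( A^{Σ_{l ∈ o} σ(l)} ), where Orb(τ) denotes the set of orbits of τ on {1,…,m}, the sum on the left is over all functions i from {1,…,m} to {1,…,n}, and integer powers A^k for k ∈ ℤ are defined since A is invertible. -/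
/-!
Restricting the index function `i` to the orbits of `τ` factors the sum into one sum per orbit.
Enumerating an orbit as `l, τ l, …, τ^k l`, its sum is the closed-walk expansion of
`Tr (A^{σ l} * A^{σ (τ l)} * ⋯ * A^{σ (τ^k l)})`, and since powers of `A` commute this product
is `A^{∑ σ}`.
-/

open scoped Classical

/-- The forward orbit of `x` under `f`, as a finset. When `f` is a bijection this is
exactly the orbit of `x` under repeated application of `f`. -/
noncomputable def fwdOrbit {N : ℕ} (f : Fin N → Fin N) (x : Fin N) : Finset (Fin N) :=
  Finset.univ.filter (fun y => ∃ k : ℕ, f^[k] x = y)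

open Finset Function

theorem Fin.sum_univ_fun_succ {ι M : Type*} [Fintype ι] [AddCommMonoid M] {m : ℕ}
    (f : (Fin (m + 1) → ι) → M) :
    ∑ i, f i = ∑ a, ∑ r : Fin m → ι, f (Fin.cons a r) := by
  rw [← (Fin.consEquiv fun _ => ι).sum_comp, Fintype.sum_prod_type]
  rfl

theorem Fin.cons_add_one {α : Type*} {m : ℕ} (a : α) (r : Fin m → α) (j : Fin (m + 1)) :
    (Fin.cons a r : Fin (m + 1) → α) (j + 1) = (Fin.snoc r a : Fin (m + 1) → α) j := by
  induction j using Fin.lastCases with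
  | last => simp [Fin.last_add_one]
  | cast k => simp [Fin.coeSucc_eq_succ]

theorem Equiv.Perm.exists_equiv_fin_of_forall_sameCycle {β : Type*} [Finite β]
    {π : Equiv.Perm β} {x₀ : β} (h : ∀ y, π.SameCycle x₀ y) :
    ∃ (m : ℕ) (e : Fin (m + 1) ≃ β), ∀ j, e (j + 1) = π (e j) := by
  obtain ⟨m, hm⟩ : ∃ m, minimalPeriod π x₀ = m + 1 :=
    Nat.exists_eq_succ_of_ne_zero
      (minimalPeriod_pos_of_mem_periodicPts (π.injective.mem_periodicPts x₀)).ne'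
  let f : Fin (m + 1) → β := fun j => π^[j] x₀
  have hf_inj : Injective f := fun i j hij =>
    Fin.ext (iterate_injOn_Iio_minimalPeriod (by simp [hm, i.is_lt]) (by simp [hm, j.is_lt]) hij)
  have hf_surj : Surjective f := fun y => by
    obtain ⟨i, rfl⟩ := (h y).exists_nat_pow_eq
    refine ⟨⟨i % (m + 1), Nat.mod_lt _ m.succ_pos⟩, ?_⟩
    simp only [f, ← hm, iterate_mod_minimalPeriod_eq, Equiv.Perm.coe_pow]
  refine ⟨m, Equiv.ofBijective f ⟨hf_inj, hf_surj⟩, fun j => ?_⟩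
  change π^[(j + 1 : Fin (m + 1))] x₀ = π (π^[j] x₀)
  rw [Fin.val_add_one, ← iterate_succ_apply' π]
  split_ifs with hj
  · rw [hj, Fin.val_last, Nat.succ_eq_add_one, ← hm, iterate_minimalPeriod, iterate_zero_apply]
  · rfl

theorem Equiv.Perm.sum_prod_apply_eq_prod_sum_fibers {α Q κ R : Type*} [Fintype α] [DecidableEq α]
    [Fintype Q] [DecidableEq Q] [Fintype κ] [CommSemiring R]
    (τ : Equiv.Perm α) (p : α → Q) (hp : ∀ x, p (τ x) = p x) (w : α → κ → κ → R) :
    ∑ i : α → κ, ∏ l, w l (i l) (i (τ l)) =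
      ∏ q, ∑ g : {x // p x = q} → κ,
        ∏ x : {x // p x = q}, w x (g x) (g (τ.subtypePerm (fun x => by rw [hp]) x)) := by
  let restrict : (α → κ) ≃ ∀ q, {x // p x = q} → κ :=
    { toFun := fun i q x => i x
      invFun := fun g x => g (p x) ⟨x, rfl⟩
      left_inv := fun _ => rfl
      right_inv := fun g => by ext q ⟨x, rfl⟩; rfl }
  rw [Fintype.prod_sum]
  refine Fintype.sum_equiv restrict _ _ fun i => ?_
  rw [← Fintype.prod_fiberwise p]
  rfl

namespace Matrix

variable {ι : Type*} [Fintype ι] [DecidableEq ι]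

section CommSemiring

variable {R : Type*} [CommSemiring R]

theorem list_prod_ofFn_apply {m : ℕ} (M : Fin (m + 1) → Matrix ι ι R) (a b : ι) :
    (List.ofFn M).prod a b = ∑ r : Fin m → ι,
      ∏ j, M j ((Fin.cons a r : Fin (m + 1) → ι) j) ((Fin.snoc r b : Fin (m + 1) → ι) j) := by
  induction m generalizing a with
  | zero => simp [Fin.snoc]
  | succ m ih =>
    rw [List.ofFn_succ, List.prod_cons, mul_apply, Fin.sum_univ_fun_succ]
    refine sum_congr rfl fun c _ => ?_
    rw [ih, mul_sum]
    refine sum_congr rfl fun r _ => ?_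
    rw [Fin.prod_univ_succ (n := m + 1), ← Fin.cons_snoc_eq_snoc_cons]
    simp only [Fin.cons_zero, Fin.cons_succ]

theorem trace_list_prod_ofFn {m : ℕ} (M : Fin (m + 1) → Matrix ι ι R) :
    (List.ofFn M).prod.trace = ∑ i : Fin (m + 1) → ι, ∏ j, M j (i j) (i (j + 1)) := by
  simp only [Fin.sum_univ_fun_succ, Fin.cons_add_one, trace, diag, list_prod_ofFn_apply]

end CommSemiring

variable {R : Type*} [CommRing R]

theorem list_prod_ofFn_zpow {A : Matrix ι ι R} (hA : IsUnit A.det) {k : ℕ} (σ : Fin k → ℤ) :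
    (List.ofFn fun j => A ^ σ j).prod = A ^ ∑ j, σ j := by
  induction k with
  | zero => simp
  | succ k ih => rw [List.ofFn_succ, List.prod_cons, ih, Fin.sum_univ_succ, zpow_add hA]

theorem sum_prod_zpow_apply_perm_of_forall_sameCycle {A : Matrix ι ι R} (hA : IsUnit A.det)
    {β : Type*} [Fintype β] [DecidableEq β] {π : Equiv.Perm β} {x₀ : β}
    (h : ∀ y, π.SameCycle x₀ y) (σ : β → ℤ) :
    ∑ i : β → ι, ∏ l, (A ^ σ l) (i l) (i (π l)) = (A ^ ∑ l, σ l).trace := by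
  obtain ⟨m, e, he⟩ := Equiv.Perm.exists_equiv_fin_of_forall_sameCycle h
  rw [← e.sum_comp σ, ← list_prod_ofFn_zpow hA, trace_list_prod_ofFn,
    ← (e.arrowCongr (Equiv.refl ι)).symm.sum_comp]
  refine Fintype.sum_congr _ _ fun i => ?_
  rw [← e.prod_comp]
  simp [he]

end Matrix

theorem mem_fwdOrbit_iff {N : ℕ} {τ : Equiv.Perm (Fin N)} {x y : Fin N} :
    y ∈ fwdOrbit τ x ↔ τ.SameCycle x y := by
  simp only [fwdOrbit, mem_filter, mem_univ, true_and, ← Equiv.Perm.coe_pow]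
  exact ⟨fun ⟨k, hk⟩ => ⟨k, by simpa using hk⟩, Equiv.Perm.SameCycle.exists_nat_pow_eq⟩

theorem fwdOrbit_eq_fwdOrbit_iff {N : ℕ} {τ : Equiv.Perm (Fin N)} {x y : Fin N} :
    fwdOrbit τ x = fwdOrbit τ y ↔ τ.SameCycle x y := by
  refine ⟨fun h => ?_, fun h => ?_⟩
  · rw [← mem_fwdOrbit_iff, h, mem_fwdOrbit_iff]
  · ext z
    simp only [mem_fwdOrbit_iff]
    exact ⟨h.symm.trans, h.trans⟩

theorem mem_fwdOrbit_iff_fwdOrbit_eq {N : ℕ} {τ : Equiv.Perm (Fin N)} {x y : Fin N} :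
    y ∈ fwdOrbit τ x ↔ fwdOrbit τ y = fwdOrbit τ x := by
  rw [mem_fwdOrbit_iff, fwdOrbit_eq_fwdOrbit_iff, Equiv.Perm.sameCycle_comm]

theorem fwdOrbit_apply {N : ℕ} (τ : Equiv.Perm (Fin N)) (x : Fin N) :
    fwdOrbit τ (τ x) = fwdOrbit τ x :=
  fwdOrbit_eq_fwdOrbit_iff.mpr (Equiv.Perm.sameCycle_apply_left.mpr (.refl _ _))

theorem sum_prod_zpow_entries_eq_prod_orbits_trace_general (n m : ℕ)
    (A : Matrix (Fin n) (Fin n) ℂ) (hA : IsUnit A)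
    (σ : Fin m → ℤ) (τ : Equiv.Perm (Fin m)) :
    ∑ i : Fin m → Fin n, ∏ l : Fin m, (A ^ (σ l)) (i l) (i (τ l))
      = ∏ o ∈ Finset.univ.image (fun x : Fin m => fwdOrbit (⇑τ) x),
          Matrix.trace (A ^ (∑ l ∈ o, σ l)) := by
  have hdet : IsUnit A.det := (Matrix.isUnit_iff_isUnit_det A).mp hA
  rw [τ.sum_prod_apply_eq_prod_sum_fibers (fwdOrbit τ) (fwdOrbit_apply τ)
      fun l a b => (A ^ σ l) a b,
    ← prod_subset (subset_univ (univ.image (fwdOrbit τ)))]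
  · refine prod_congr rfl fun o ho => ?_
    obtain ⟨x₀, -, rfl⟩ := mem_image.mp ho
    have hcycle (y : {x // fwdOrbit τ x = fwdOrbit τ x₀}) :
        (τ.subtypePerm (p := (fwdOrbit τ · = fwdOrbit τ x₀))
          fun x => by rw [fwdOrbit_apply]).SameCycle ⟨x₀, rfl⟩ y := by
      rw [Equiv.Perm.sameCycle_subtypePerm, ← mem_fwdOrbit_iff, mem_fwdOrbit_iff_fwdOrbit_eq]
      exact y.2
    rw [Matrix.sum_prod_zpow_apply_perm_of_forall_sameCycle hdet hcycle,
      ← sum_subtype _ fun _ => mem_fwdOrbit_iff_fwdOrbit_eq]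
  · intro o _ ho
    have : IsEmpty {x // fwdOrbit τ x = o} := ⟨fun x => ho (mem_image.mpr ⟨x, mem_univ _, x.2⟩)⟩
    simp

/-- For an invertible `n × n` complex matrix `A`, `σ : Fin m → ℤ` and a permutation `τ` of
`Fin m`, one has
`∑_{i : Fin m → Fin n} ∏_l (A^{σ l})_{i l, i (τ l)} = ∏_{o ∈ Orb(τ)} Tr(A^{∑_{l ∈ o} σ l})`. -/
theorem sum_prod_zpow_entries_eq_prod_orbits_trace (n m : ℕ) (hn : 1 ≤ n) (hm : 1 ≤ m)
    (A : Matrix (Fin n) (Fin n) ℂ) (hA : IsUnit A)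
    (σ : Fin m → ℤ) (τ : Equiv.Perm (Fin m)) :
    ∑ i : Fin m → Fin n, ∏ l : Fin m, (A ^ (σ l)) (i l) (i (τ l))
      = ∏ o ∈ Finset.univ.image (fun x : Fin m => fwdOrbit (⇑τ) x),
          Matrix.trace (A ^ (∑ l ∈ o, σ l)) :=
  sum_prod_zpow_entries_eq_prod_orbits_trace_general n m A hA σ τ
end

section
/- Let k ≥ 1 and n ≥ 1 be integers and let t be a real number with 0 < t ≤ 1/k. Then 2·min(k,n) − 2·exp(−k·max(k,n)·t/n) · sinh(k·min(k,n)·t/n) / sinh(k·t/n) ≤ 4·k²·t. -/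
open Finset

private lemma sinh_shift (x s : ℝ) :
    Real.sinh (x + s) = Real.exp s * Real.sinh x + Real.sinh s * Real.exp (-x) := by
  simp only [Real.sinh_eq, Real.exp_add, Real.exp_neg]
  have hx := Real.exp_ne_zero x
  have hs := Real.exp_ne_zero s
  field_simp
  ring

private lemma sinh_nat_mul (s : ℝ) (m : ℕ) : Real.sinh ((m : ℝ) * s) =
    Real.sinh s * ∑ j ∈ range m, Real.exp (((m : ℝ) - 1 - 2 * j) * s) := by
  induction m with
  | zero => simp
  | succ m ih =>
    have hcast : ((m + 1 : ℕ) : ℝ) * s = (m : ℝ) * s + s := by push_cast; ring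
    rw [hcast, sinh_shift, ih, Finset.sum_range_succ]
    push_cast
    have h1 : ∀ j ∈ range m,
        Real.exp (((m : ℝ) + 1 - 1 - 2 * j) * s)
          = Real.exp s * Real.exp (((m : ℝ) - 1 - 2 * j) * s) := by
      intro j _
      rw [← Real.exp_add]
      congr 1
      ring
    rw [Finset.sum_congr rfl h1, ← Finset.mul_sum,
      show ((m : ℝ) + 1 - 1 - 2 * (m : ℝ)) * s = -((m : ℝ) * s) by ring]
    ring

private lemma sum_two_j (m : ℕ) : ∑ j ∈ range m, (2 * (j : ℝ)) = (m : ℝ) * ((m : ℝ) - 1) := by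
  induction m with
  | zero => simp
  | succ m ih =>
    rw [Finset.sum_range_succ, ih]
    push_cast
    ring

/-- For integers `k, n ≥ 1` and a real `t` with `0 < t ≤ 1/k`, one has
`2·min(k,n) − 2·exp(−k·max(k,n)·t/n)·sinh(k·min(k,n)·t/n)/sinh(k·t/n) ≤ 4·k²·t`. -/
theorem trace_increment_bound (k n : ℕ) (hk : 1 ≤ k) (hn : 1 ≤ n)
    (t : ℝ) (ht : 0 < t) (ht' : t ≤ 1 / (k : ℝ)) :
    2 * (min k n : ℝ) -
        2 * Real.exp (-((k : ℝ) * (max k n : ℝ) * t) / (n : ℝ)) *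
          Real.sinh ((k : ℝ) * (min k n : ℝ) * t / (n : ℝ)) /
          Real.sinh ((k : ℝ) * t / (n : ℝ))
      ≤ 4 * (k : ℝ) ^ 2 * t := by
  rw [← Nat.cast_min, ← Nat.cast_max]
  set m : ℕ := min k n with hm
  set M : ℕ := max k n with hM
  have hkpos : (0 : ℝ) < k := by exact_mod_cast hk
  have hnpos : (0 : ℝ) < n := by exact_mod_cast hn
  set s : ℝ := (k : ℝ) * t / n with hs_def
  have hs : 0 < s := by positivity
  have hmle : (m : ℝ) ≤ (M : ℝ) := by exact_mod_cast min_le_max (a := k) (b := n)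
  have hmM : (m : ℝ) * (M : ℝ) = (k : ℝ) * n := by
    have := min_mul_max k n
    exact_mod_cast this
  have harg1 : -((k : ℝ) * (M : ℝ) * t) / (n : ℝ) = -((M : ℝ) * s) := by
    rw [hs_def]; field_simp; try ring; try tauto
  have harg2 : (k : ℝ) * (m : ℝ) * t / (n : ℝ) = (m : ℝ) * s := by
    rw [hs_def]; field_simp
  rw [harg1, harg2, sinh_nat_mul]
  have hsinh : 0 < Real.sinh s := Real.sinh_pos_iff.mpr hs
  have hET : Real.exp (-((M : ℝ) * s)) * ∑ j ∈ range m, Real.exp (((m : ℝ) - 1 - 2 * j) * s)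
      = ∑ j ∈ range m, Real.exp (-(((M : ℝ) - m + 1 + 2 * j) * s)) := by
    rw [Finset.mul_sum]
    refine Finset.sum_congr rfl fun j _ => ?_
    rw [← Real.exp_add]
    congr 1
    ring
  have hdiv : 2 * Real.exp (-((M : ℝ) * s)) *
      (Real.sinh s * ∑ j ∈ range m, Real.exp (((m : ℝ) - 1 - 2 * j) * s)) / Real.sinh s
      = 2 * ∑ j ∈ range m, Real.exp (-(((M : ℝ) - m + 1 + 2 * j) * s)) := by
    rw [mul_comm (Real.sinh s), ← mul_assoc, mul_div_assoc, div_self hsinh.ne', mul_one,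
      mul_assoc, hET]
  rw [hdiv]
  -- now show : 2*m - 2*∑ exp(-(a_j s)) ≤ 4 k² t
  have hterm : ∀ j ∈ range m,
      1 - ((M : ℝ) - m + 1 + 2 * j) * s ≤ Real.exp (-(((M : ℝ) - m + 1 + 2 * j) * s)) := by
    intro j _
    have := Real.add_one_le_exp (-(((M : ℝ) - m + 1 + 2 * j) * s))
    linarith
  have hsum_le : ∑ j ∈ range m, (1 - ((M : ℝ) - m + 1 + 2 * j) * s)
      ≤ ∑ j ∈ range m, Real.exp (-(((M : ℝ) - m + 1 + 2 * j) * s)) :=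
    Finset.sum_le_sum hterm
  have hsum_eval : ∑ j ∈ range m, (1 - ((M : ℝ) - m + 1 + 2 * j) * s)
      = (m : ℝ) - (m : ℝ) * (M : ℝ) * s := by
    rw [Finset.sum_sub_distrib, Finset.sum_const, Finset.card_range]
    have : ∑ j ∈ range m, (((M : ℝ) - m + 1 + 2 * j) * s)
        = ((m : ℝ) * ((M : ℝ) - m + 1) + (m : ℝ) * ((m : ℝ) - 1)) * s := by
      rw [← Finset.sum_mul]
      congr 1
      rw [Finset.sum_add_distrib, Finset.sum_const, Finset.card_range, sum_two_j]
      ring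
    rw [this]
    push_cast
    ring
  have hks : (m : ℝ) * (M : ℝ) * s = (k : ℝ) ^ 2 * t := by
    rw [hmM, hs_def]
    field_simp
  have hk2t : 0 ≤ (k : ℝ) ^ 2 * t := by positivity
  rw [hsum_eval, hks] at hsum_le
  linarith
end
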